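/- Let H' be the hypergraph obtained from a hypergraph H = (V, E) by adding, for each hyperedge e ∈ E, two fresh vertices a_e (labelled 1) and b_e (labelled p_e), a new hyperedge e' = {a_e, b_e}, and inserting a_e into e; label each original vertex v with p_v. Then for every assignment α to the variables {p_v} ∪ {p_e}, the hypergraph program H' has an independent set of hyperedges covering all zeros under α if and only if f_H(α) = 1. -/

import Mathlib

/-!
Independent covers of `H'` and of `H` correspond. An independent set `X` of hyperedges of `H`
witnessing `f_H(α) = 1` gives the cover `{e ∪ {a_e} | e ∈ X} ∪ {e' | e ∉ X}` of `H'`: an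
uncovered `b_e` has `e ∈ X`, so `α(p_e) = 1`. Conversely, from a cover of `H'` keep those `e`
whose enlarged copy `e ∪ {a_e}` is chosen; a zero `b_e` forces `e'` into the cover, hence
`e ∪ {a_e}` out of it, since both contain `a_e`.
-/

inductive HGPLabel (α : Type) : Type
  | zero : HGPLabel α
  | one : HGPLabel α
  | pos (p : α) : HGPLabel α
  | neg (p : α) : HGPLabel α

def HGPLabel.eval {α : Type} (σ : α → Bool) : HGPLabel α → Bool
  | .zero => false
  | .one => true
  | .pos p => σ p
  | .neg p => !σ p

variable {V : Type} [DecidableEq V]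

/-- The hyperedge `e` of `H'`, with the fresh vertex `a_e = Sum.inr (e, false)`
inserted. -/
def edgeA (e : Finset V) : Finset (V ⊕ (Finset V × Bool)) :=
  e.image Sum.inl ∪ {Sum.inr (e, false)}

/-- The new hyperedge `e' = {a_e, b_e}` with `a_e = Sum.inr (e, false)` and
`b_e = Sum.inr (e, true)`. -/
def edgeB (e : Finset V) : Finset (V ⊕ (Finset V × Bool)) :=
  {Sum.inr (e, false), Sum.inr (e, true)}

/-- The hyperedges of `H'`. -/
def edges' (E : Finset (Finset V)) : Finset (Finset (V ⊕ (Finset V × Bool))) :=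
  E.image edgeA ∪ E.image edgeB

/-- The labelling of `H'`: original vertices `v` get `p_v`, each `a_e` gets 1,
and each `b_e` gets `p_e`. -/
def label' : V ⊕ (Finset V × Bool) → HGPLabel (V ⊕ Finset V)
  | .inl v => .pos (.inl v)
  | .inr (_, false) => .one
  | .inr (e, true) => .pos (.inr e)

/-- Vertices of `H'`: all original vertices, and the fresh vertices `a_e`, `b_e`
for hyperedges `e ∈ E` only. -/
def isVert (E : Finset (Finset V)) : V ⊕ (Finset V × Bool) → Prop
  | .inl _ => True
  | .inr (e, _) => e ∈ E

/-- The hypergraph function `f_H` of `H = (V, E)`. -/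
def hyperFun (E : Finset (Finset V)) (σ : V ⊕ Finset V → Bool) : Prop :=
  ∃ X ⊆ E, (X : Set (Finset V)).Pairwise Disjoint ∧
    (∀ e ∈ X, σ (Sum.inr e) = true) ∧
    (∀ v : V, (¬ ∃ e ∈ X, v ∈ e) → σ (Sum.inl v) = true)

section Membership

variable {e e' : Finset V} {v : V} {b : Bool}

@[simp] lemma inl_mem_edgeA : (Sum.inl v : V ⊕ (Finset V × Bool)) ∈ edgeA e ↔ v ∈ e := by
  simp [edgeA]

@[simp] lemma inr_mem_edgeA : Sum.inr (e', b) ∈ edgeA e ↔ e' = e ∧ b = false := by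
  simp [edgeA]

@[simp] lemma inl_notMem_edgeB : (Sum.inl v : V ⊕ (Finset V × Bool)) ∉ edgeB e := by
  simp [edgeB]

@[simp] lemma inr_mem_edgeB : Sum.inr (e', b) ∈ edgeB e ↔ e' = e := by
  cases b <;> simp [edgeB]

lemma edgeA_injective : Function.Injective (edgeA : Finset V → _) := fun e e' h => by
  have : Sum.inr (e, false) ∈ edgeA e' := h ▸ inr_mem_edgeA.2 ⟨rfl, rfl⟩
  exact (inr_mem_edgeA.1 this).1

lemma edgeA_ne_edgeB : edgeA e ≠ edgeB e' := fun h => by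
  have : Sum.inr (e', true) ∈ edgeA e := h ▸ inr_mem_edgeB.2 rfl
  simp at this

lemma disjoint_edgeA_edgeA (hne : e ≠ e') :
    Disjoint (edgeA e) (edgeA e') ↔ Disjoint e e' := by
  simp only [Finset.disjoint_left, Sum.forall, inl_mem_edgeA, Prod.forall, Bool.forall_bool,
    inr_mem_edgeA]
  grind

lemma disjoint_edgeA_edgeB : Disjoint (edgeA e) (edgeB e') ↔ e ≠ e' := by
  simp only [Finset.disjoint_left, Sum.forall, inl_mem_edgeA, Prod.forall, Bool.forall_bool,
    inr_mem_edgeA, inr_mem_edgeB, inl_notMem_edgeB]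
  grind

lemma disjoint_edgeB_edgeB (hne : e ≠ e') : Disjoint (edgeB e) (edgeB e') := by
  simp only [Finset.disjoint_left, Sum.forall, inl_notMem_edgeB, Prod.forall, inr_mem_edgeB]
  grind

end Membership

section Edges

variable {E : Finset (Finset V)} {f : Finset (V ⊕ (Finset V × Bool))}

lemma mem_edges' : f ∈ edges' E ↔ ∃ e ∈ E, f = edgeA e ∨ f = edgeB e := by
  simp only [edges', Finset.mem_union, Finset.mem_image]
  grind

lemma exists_eq_edgeA_of_inl_mem {v : V} (hf : f ∈ edges' E) (hv : Sum.inl v ∈ f) :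
    ∃ e ∈ E, f = edgeA e ∧ v ∈ e := by
  obtain ⟨e, he, rfl | rfl⟩ := mem_edges'.1 hf
  · exact ⟨e, he, rfl, inl_mem_edgeA.1 hv⟩
  · exact absurd hv inl_notMem_edgeB

lemma eq_edgeB_of_inr_true_mem {e : Finset V} (hf : f ∈ edges' E) (he : Sum.inr (e, true) ∈ f) :
    f = edgeB e := by
  obtain ⟨e₁, -, rfl | rfl⟩ := mem_edges'.1 hf
  · simp at he
  · rw [inr_mem_edgeB.1 he]

end Edges

section Correspondence

variable {E : Finset (Finset V)} {σ : V ⊕ Finset V → Bool}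

lemma hyperFun_of_cover {X : Finset (Finset (V ⊕ (Finset V × Bool)))} (hXE : X ⊆ edges' E)
    (hX : (X : Set (Finset (V ⊕ (Finset V × Bool)))).Pairwise Disjoint)
    (hcov : ∀ w, isVert E w → (label' w).eval σ = false → ∃ f ∈ X, w ∈ f) :
    hyperFun E σ := by
  refine ⟨E.filter (edgeA · ∈ X), Finset.filter_subset _ _, ?_, ?_, ?_⟩
  · intro e he e' he' hne
    simp only [Finset.coe_filter, Set.mem_ofPred_eq] at he he'
    exact (disjoint_edgeA_edgeA hne).1 (hX he.2 he'.2 (edgeA_injective.ne hne))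
  · intro e he
    rw [Finset.mem_filter] at he
    by_contra hσ
    obtain ⟨f, hfX, hbf⟩ :=
      hcov (Sum.inr (e, true)) he.1 (by simpa [label', HGPLabel.eval] using hσ)
    obtain rfl := eq_edgeB_of_inr_true_mem (hXE hfX) hbf
    exact disjoint_edgeA_edgeB.1 (hX he.2 hfX edgeA_ne_edgeB) rfl
  · intro v hv
    by_contra hσ
    obtain ⟨f, hfX, hvf⟩ :=
      hcov (Sum.inl v) trivial (by simpa [label', HGPLabel.eval] using hσ)
    obtain ⟨e, he, rfl, hve⟩ := exists_eq_edgeA_of_inl_mem (hXE hfX) hvf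
    exact hv ⟨e, Finset.mem_filter.2 ⟨he, hfX⟩, hve⟩

lemma exists_cover_of_hyperFun (h : hyperFun E σ) :
    ∃ X ⊆ edges' E, (X : Set (Finset (V ⊕ (Finset V × Bool)))).Pairwise Disjoint ∧
      ∀ w, isVert E w → (label' w).eval σ = false → ∃ f ∈ X, w ∈ f := by
  obtain ⟨Y, hYE, hY, hσe, hσv⟩ := h
  refine ⟨Y.image edgeA ∪ (E \ Y).image edgeB,
    Finset.union_subset_union (Finset.image_subset_image hYE)
      (Finset.image_subset_image Finset.sdiff_subset), ?_, ?_⟩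
  · intro f hf g hg hne
    simp only [Finset.coe_union, Finset.coe_image, Set.mem_union, Set.mem_image,
      Finset.mem_coe, Finset.mem_sdiff] at hf hg
    rcases hf with ⟨e, he, rfl⟩ | ⟨e, he, rfl⟩ <;>
      rcases hg with ⟨e', he', rfl⟩ | ⟨e', he', rfl⟩
    · have hee : e ≠ e' := fun h => hne (h ▸ rfl)
      exact (disjoint_edgeA_edgeA hee).2 (hY he he' hee)
    · exact disjoint_edgeA_edgeB.2 fun h => he'.2 (h ▸ he)
    · exact (disjoint_edgeA_edgeB.2 fun h : e' = e => he.2 (h ▸ he')).symm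
    · exact disjoint_edgeB_edgeB fun h => hne (h ▸ rfl)
  · rintro (v | ⟨e, _ | _⟩) hw hz
    · have hvY : ∃ e ∈ Y, v ∈ e := by
        by_contra hv
        simp [label', HGPLabel.eval, hσv v hv] at hz
      obtain ⟨e, he, hve⟩ := hvY
      exact ⟨edgeA e, Finset.mem_union_left _ (Finset.mem_image_of_mem _ he), by simpa⟩
    · simp [label', HGPLabel.eval] at hz
    · have he : e ∉ Y := fun he => by simp [label', HGPLabel.eval, hσe e he] at hz
      exact ⟨edgeB e, Finset.mem_union_right _
        (Finset.mem_image_of_mem _ (Finset.mem_sdiff.2 ⟨hw, he⟩)), by simp⟩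

end Correspondence

/-- The monotone hypergraph program `H'` obtained from `H` by adding, for each
hyperedge `e`, fresh vertices `a_e` (labelled 1, inserted into `e`) and `b_e`
(labelled `p_e`) and the new hyperedge `{a_e, b_e}` computes the hypergraph
function `f_H`. -/
theorem stmt_15 (E : Finset (Finset V)) :
    ∀ σ : V ⊕ Finset V → Bool,
      (∃ X ⊆ edges' E, (X : Set (Finset (V ⊕ (Finset V × Bool)))).Pairwise Disjoint ∧
        ∀ w : V ⊕ (Finset V × Bool), isVert E w →
          (label' w).eval σ = false → ∃ f ∈ X, w ∈ f) ↔
      hyperFun E σ :=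
  fun _ =>
    ⟨fun ⟨_, hXE, hX, hcov⟩ => hyperFun_of_cover hXE hX hcov, exists_cover_of_hyperFun⟩
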